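/- Define v(x, y) = −4xy·log(x² + y²) + 2(x² − y²)·(π/2 − 2·arctan(y/x)) − π(x² + y²) for x ≠ 0, and define w : ℝ² → ℝ by w(x, y) = v(x, y) if x·y ≥ 0 and x ≠ 0; w(x, y) = −v(−x, y) if x < 0 ≤ y; w(x, y) = −v(x, y) if x > 0 ≥ y; and w(0, y) = 0. Set Z̃(x, y) = (w(x, y) − π(x² + y²) + 8xy)/(8π). Then at every point (x, y) with x·y ≠ 0 the function Z̃ is twice differentiable and its Laplacian satisfies ΔZ̃(x, y) = −1 if x·y > 0 and ΔZ̃(x, y) = 0 if x·y < 0. -/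

import Mathlib

open Real

noncomputable section

/-- `v(x,y) = −4xy ln(x²+y²) + 2(x²−y²)(π/2 − 2 arctan(y/x)) − π(x²+y²)`. -/
def vfun (x y : ℝ) : ℝ :=
  -4 * x * y * Real.log (x ^ 2 + y ^ 2)
    + 2 * (x ^ 2 - y ^ 2) * (π / 2 - 2 * Real.arctan (y / x))
    - π * (x ^ 2 + y ^ 2)

/-- The odd reflection `w` of `v`, defined piecewise on the four quadrants. -/
def wfun (x y : ℝ) : ℝ :=
  if 0 ≤ x * y ∧ x ≠ 0 then vfun x y
  else if x < 0 ∧ 0 ≤ y then -vfun (-x) y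
  else if 0 < x ∧ y ≤ 0 then -vfun x y
  else 0

/-- `Z̃(x,y) = (w(x,y) − π(x²+y²) + 8xy)/(8π)`. -/
def Ztilde (x y : ℝ) : ℝ :=
  (wfun x y - π * (x ^ 2 + y ^ 2) + 8 * x * y) / (8 * π)

/-!
On each open quadrant `Z̃` agrees with `(σ v(εx, y) − π(x² + y²) + 8xy)/(8π)`, where `σ = ±1` is
the sign of `xy` and `ε = ±1` accounts for the reflection `x ↦ −x` in the second quadrant. A direct
computation gives `v_xx = −8 arctan(y/x)` and `v_yy = 8 arctan(y/x) − 4π`, so `Δv = −4π` and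
`ΔZ̃ = (−4πσ − 4π)/(8π) = −(σ + 1)/2`.
-/

open Filter Topology

theorem deriv_deriv_eq_of_eventually_hasDerivAt {𝕜 F : Type*} [NontriviallyNormedField 𝕜]
    [NormedAddCommGroup F] [NormedSpace 𝕜 F] {f f' : 𝕜 → F} {x : 𝕜} {f'' : F}
    (hf : ∀ᶠ t in 𝓝 x, HasDerivAt f (f' t) t) (hf' : HasDerivAt f' f'' x) :
    deriv (deriv f) x = f'' :=
  (EventuallyEq.deriv_eq (hf.mono fun _ ht => ht.deriv)).trans hf'.deriv

def laplacian2 (f : ℝ → ℝ → ℝ) (x y : ℝ) : ℝ :=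
  deriv (fun s => deriv (fun t => f t y) s) x + deriv (fun s => deriv (fun t => f x t) s) y

theorem laplacian2_congr {f g : ℝ → ℝ → ℝ} {x y : ℝ}
    (h : (fun p : ℝ × ℝ => f p.1 p.2) =ᶠ[𝓝 (x, y)] fun p => g p.1 p.2) :
    laplacian2 f x y = laplacian2 g x y := by
  have hx : (fun t => f t y) =ᶠ[𝓝 x] fun t => g t y :=
    h.comp_tendsto ((continuous_id.prodMk continuous_const).tendsto' x (x, y) rfl)
  have hy : (fun t => f x t) =ᶠ[𝓝 y] fun t => g x t :=
    h.comp_tendsto ((continuous_const.prodMk continuous_id).tendsto' y (x, y) rfl)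
  simp only [laplacian2, hx.deriv.deriv_eq, hy.deriv.deriv_eq]

theorem hasDerivAt_arctan_const_div {x : ℝ} (y : ℝ) (hx : x ≠ 0) :
    HasDerivAt (fun t => arctan (y / t)) (-y / (x ^ 2 + y ^ 2)) x := by
  have hr : x ^ 2 + y ^ 2 ≠ 0 := by positivity
  convert ((hasDerivAt_inv hx).const_mul y).arctan using 1
  · simp only [div_eq_mul_inv]
  · field_simp

theorem hasDerivAt_arctan_div_const {x : ℝ} (y : ℝ) (hx : x ≠ 0) :
    HasDerivAt (fun t => arctan (t / x)) (x / (x ^ 2 + y ^ 2)) y := by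
  have hr : x ^ 2 + y ^ 2 ≠ 0 := by positivity
  convert ((hasDerivAt_id' y).div_const x).arctan using 1
  field_simp

def vfunDx (x y : ℝ) : ℝ :=
  -4 * y * log (x ^ 2 + y ^ 2) - 4 * y - 8 * x * arctan (y / x)

def vfunDy (x y : ℝ) : ℝ :=
  -4 * x * log (x ^ 2 + y ^ 2) - 4 * x + 8 * y * arctan (y / x) - 4 * π * y

theorem hasDerivAt_vfun_fst {x : ℝ} (y : ℝ) (hx : x ≠ 0) :
    HasDerivAt (fun t => vfun t y) (vfunDx x y) x := by
  have hr : x ^ 2 + y ^ 2 ≠ 0 := by positivity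
  have hsq := (hasDerivAt_pow 2 x).add_const (y ^ 2)
  have hatan := ((hasDerivAt_arctan_const_div y hx).const_mul 2).const_sub (π / 2)
  refine ((((((hasDerivAt_id' x).const_mul (-4)).mul_const y).mul (hsq.log hr)).add
    ((((hasDerivAt_pow 2 x).sub_const (y ^ 2)).const_mul 2).mul hatan)).sub
    (hsq.const_mul π)).congr_deriv ?_
  unfold vfunDx
  field_simp
  ring

theorem hasDerivAt_vfun_snd (x : ℝ) {y : ℝ} (hx : x ≠ 0) :
    HasDerivAt (fun t => vfun x t) (vfunDy x y) y := by
  have hr : x ^ 2 + y ^ 2 ≠ 0 := by positivity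
  have hsq := (hasDerivAt_pow 2 y).const_add (x ^ 2)
  have hatan := ((hasDerivAt_arctan_div_const y hx).const_mul 2).const_sub (π / 2)
  refine (((((hasDerivAt_id' y).const_mul (-4 * x)).mul (hsq.log hr)).add
    ((((hasDerivAt_pow 2 y).const_sub (x ^ 2)).const_mul 2).mul hatan)).sub
    (hsq.const_mul π)).congr_deriv ?_
  unfold vfunDy
  field_simp
  ring

theorem hasDerivAt_vfunDx_fst {x : ℝ} (y : ℝ) (hx : x ≠ 0) :
    HasDerivAt (fun t => vfunDx t y) (-8 * arctan (y / x)) x := by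
  have hr : x ^ 2 + y ^ 2 ≠ 0 := by positivity
  have hlog := ((hasDerivAt_pow 2 x).add_const (y ^ 2)).log hr
  refine (((hlog.const_mul (-4 * y)).sub_const (4 * y)).sub
    (((hasDerivAt_id' x).const_mul 8).mul (hasDerivAt_arctan_const_div y hx))).congr_deriv ?_
  field_simp
  ring

theorem hasDerivAt_vfunDy_snd (x : ℝ) {y : ℝ} (hx : x ≠ 0) :
    HasDerivAt (fun t => vfunDy x t) (8 * arctan (y / x) - 4 * π) y := by
  have hr : x ^ 2 + y ^ 2 ≠ 0 := by positivity
  have hlog := ((hasDerivAt_pow 2 y).const_add (x ^ 2)).log hr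
  refine ((((hlog.const_mul (-4 * x)).sub_const (4 * x)).add
    (((hasDerivAt_id' y).const_mul 8).mul (hasDerivAt_arctan_div_const y hx))).sub
    ((hasDerivAt_id' y).const_mul (4 * π))).congr_deriv ?_
  field_simp
  ring

theorem contDiffAt_vfun {x : ℝ} (y : ℝ) (hx : x ≠ 0) :
    ContDiffAt ℝ 2 (fun p : ℝ × ℝ => vfun p.1 p.2) (x, y) := by
  have hr : x ^ 2 + y ^ 2 ≠ 0 := by positivity
  have hlog : ContDiffAt ℝ 2 (fun p : ℝ × ℝ => log (p.1 ^ 2 + p.2 ^ 2)) (x, y) :=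
    ContDiffAt.log (by fun_prop) hr
  have hatan : ContDiffAt ℝ 2 (fun p : ℝ × ℝ => arctan (p.2 / p.1)) (x, y) :=
    contDiff_arctan.contDiffAt.comp (x, y) (contDiffAt_snd.div contDiffAt_fst hx)
  unfold vfun
  fun_prop

theorem wfun_of_mul_pos {x y : ℝ} (h : 0 < x * y) : wfun x y = vfun x y :=
  if_pos ⟨h.le, left_ne_zero_of_mul h.ne'⟩

theorem wfun_of_neg_of_pos {x y : ℝ} (hx : x < 0) (hy : 0 < y) : wfun x y = -vfun (-x) y := by
  rw [wfun, if_neg fun h => (mul_neg_of_neg_of_pos hx hy).not_ge h.1, if_pos ⟨hx, hy.le⟩]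

theorem wfun_of_pos_of_neg {x y : ℝ} (hx : 0 < x) (hy : y < 0) : wfun x y = -vfun x y := by
  rw [wfun, if_neg fun h => (mul_neg_of_pos_of_neg hx hy).not_ge h.1,
    if_neg fun h => hx.not_gt h.1, if_pos ⟨hx, hy.le⟩]

def Zbranch (σ ε x y : ℝ) : ℝ :=
  (σ * vfun (ε * x) y - π * (x ^ 2 + y ^ 2) + 8 * x * y) / (8 * π)

theorem Ztilde_eq_Zbranch {σ ε x y : ℝ} (h : wfun x y = σ * vfun (ε * x) y) :
    Ztilde x y = Zbranch σ ε x y := by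
  rw [Ztilde, Zbranch, h]

theorem Ztilde_eventuallyEq_Zbranch {x y : ℝ} (hxy : x * y ≠ 0) :
    ∃ ε : ℝ, ε ^ 2 = 1 ∧ (fun p : ℝ × ℝ => Ztilde p.1 p.2) =ᶠ[𝓝 (x, y)]
      fun p => Zbranch (if 0 < x * y then 1 else -1) ε p.1 p.2 := by
  rcases hxy.lt_or_gt with hneg | hpos
  · rw [if_neg hneg.not_gt]
    rcases mul_neg_iff.1 hneg with ⟨hx, hy⟩ | ⟨hx, hy⟩
    · refine ⟨1, one_pow 2, ?_⟩
      filter_upwards [(isOpen_lt continuous_const continuous_fst).mem_nhds hx,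
        (isOpen_lt continuous_snd continuous_const).mem_nhds hy] with p hp1 hp2
      exact Ztilde_eq_Zbranch (by rw [wfun_of_pos_of_neg hp1 hp2]; simp)
    · refine ⟨-1, by norm_num, ?_⟩
      filter_upwards [(isOpen_lt continuous_fst continuous_const).mem_nhds hx,
        (isOpen_lt continuous_const continuous_snd).mem_nhds hy] with p hp1 hp2
      exact Ztilde_eq_Zbranch (by rw [wfun_of_neg_of_pos hp1 hp2]; simp)
  · rw [if_pos hpos]
    refine ⟨1, one_pow 2, ?_⟩
    filter_upwards [(isOpen_lt continuous_const (continuous_fst.mul continuous_snd)).mem_nhds hpos]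
      with p hp
    exact Ztilde_eq_Zbranch (by rw [wfun_of_mul_pos hp]; simp)

theorem contDiffAt_Zbranch (σ : ℝ) {ε x : ℝ} (y : ℝ) (hε : ε ≠ 0) (hx : x ≠ 0) :
    ContDiffAt ℝ 2 (fun p : ℝ × ℝ => Zbranch σ ε p.1 p.2) (x, y) := by
  have hv : ContDiffAt ℝ 2 (fun p : ℝ × ℝ => vfun (ε * p.1) p.2) (x, y) :=
    (contDiffAt_vfun y (mul_ne_zero hε hx)).comp (f := fun p : ℝ × ℝ => (ε * p.1, p.2)) (x, y)
      (by fun_prop)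
  unfold Zbranch
  fun_prop

theorem deriv_deriv_Zbranch_fst (σ : ℝ) {ε x : ℝ} (y : ℝ) (hε : ε ≠ 0) (hx : x ≠ 0) :
    deriv (deriv fun t => Zbranch σ ε t y) x
      = (σ * ε ^ 2 * (-8 * arctan (y / (ε * x))) - 2 * π) / (8 * π) := by
  have hscale (t : ℝ) : HasDerivAt (fun s => ε * s) ε t := by
    simpa using (hasDerivAt_id' t).const_mul ε
  refine deriv_deriv_eq_of_eventually_hasDerivAt
    (f' := fun t => (σ * (vfunDx (ε * t) y * ε) - π * (2 * t) + 8 * y) / (8 * π)) ?_ ?_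
  · filter_upwards [eventually_ne_nhds hx] with t ht
    have hv := (hasDerivAt_vfun_fst y (mul_ne_zero hε ht)).scomp t (hscale t)
    refine ((((hv.const_mul σ).sub (((hasDerivAt_pow 2 t).add_const (y ^ 2)).const_mul π)).add
      (((hasDerivAt_id' t).const_mul 8).mul_const y)).div_const _).congr_deriv ?_
    ring
  · have hvx := (hasDerivAt_vfunDx_fst y (mul_ne_zero hε hx)).scomp x (hscale x)
    refine (((((hvx.mul_const ε).const_mul σ).sub
      (((hasDerivAt_id' x).const_mul 2).const_mul π)).add_const _).div_const _).congr_deriv ?_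
    ring

theorem deriv_deriv_Zbranch_snd (σ ε : ℝ) {x : ℝ} (y : ℝ) (hx : ε * x ≠ 0) :
    deriv (deriv fun t => Zbranch σ ε x t) y
      = (σ * (8 * arctan (y / (ε * x)) - 4 * π) - 2 * π) / (8 * π) := by
  refine deriv_deriv_eq_of_eventually_hasDerivAt
    (f' := fun t => (σ * vfunDy (ε * x) t - π * (2 * t) + 8 * x) / (8 * π))
    (.of_forall fun t => ?_) ?_
  · refine (((((hasDerivAt_vfun_snd (ε * x) hx).const_mul σ).sub
      (((hasDerivAt_pow 2 t).const_add (x ^ 2)).const_mul π)).add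
      ((hasDerivAt_id' t).const_mul (8 * x))).div_const _).congr_deriv ?_
    ring
  · refine (((((hasDerivAt_vfunDy_snd (ε * x) hx).const_mul σ).sub
      (((hasDerivAt_id' y).const_mul 2).const_mul π)).add_const _).div_const _).congr_deriv ?_
    ring

theorem laplacian2_Zbranch (σ : ℝ) {ε x : ℝ} (y : ℝ) (hε : ε ^ 2 = 1) (hx : x ≠ 0) :
    laplacian2 (Zbranch σ ε) x y = -(σ + 1) / 2 := by
  have hε0 : ε ≠ 0 := by rintro rfl; norm_num at hε
  rw [laplacian2, deriv_deriv_Zbranch_fst σ y hε0 hx,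
    deriv_deriv_Zbranch_snd σ ε y (mul_ne_zero hε0 hx), hε]
  field_simp
  ring

/-- At every point with `xy ≠ 0`, `Z̃` is twice differentiable and
`ΔZ̃ = −1` on `{xy > 0}` while `ΔZ̃ = 0` on `{xy < 0}`. -/
theorem statement16 (x y : ℝ) (hxy : x * y ≠ 0) :
    ContDiffAt ℝ 2 (fun p : ℝ × ℝ => Ztilde p.1 p.2) (x, y) ∧
    deriv (fun s => deriv (fun t => Ztilde t y) s) x
        + deriv (fun s => deriv (fun t => Ztilde x t) s) y
      = (if 0 < x * y then -1 else 0) := by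
  obtain ⟨ε, hε, hZ⟩ := Ztilde_eventuallyEq_Zbranch hxy
  have hx : x ≠ 0 := left_ne_zero_of_mul hxy
  refine ⟨(contDiffAt_Zbranch _ y (by rintro rfl; norm_num at hε) hx).congr_of_eventuallyEq hZ, ?_⟩
  change laplacian2 Ztilde x y = _
  rw [laplacian2_congr hZ, laplacian2_Zbranch _ y hε hx]
  split_ifs <;> norm_num
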